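/- arXiv:2501.02938 — 3 statements merged into one kernel-verified Lean document; each statement's English description precedes it below -/
import Mathlib

section
/- Let L(X) = Σᵢ AᵢXBᵢ with all Aᵢ, Bᵢ symmetric n×n and L positive definite in the trace inner product, P ∈ R^{n×s}. The Hessian of φ(α) = Φ(X_k + P α Pᵀ), a linear map on R^{s×s}, equals in Kronecker (vectorized) form H = Σ_{i=1}^ℓ (Pᵀ Bᵢ P) ⊗ (Pᵀ Aᵢ P). If P has full column rank, H is symmetric positive definite. -/
/-! With column-stacking, `(Bᵀ ⊗ₖ A) *ᵥ vec X = vec (A X B)` and `vec X ⬝ᵥ vec Y = tr (Xᵀ Y)`,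
so the quadratic form of `H` at `vec β` is `⟨PβPᵀ, L(PβPᵀ)⟩`. Symmetry of `H` is inherited
termwise from that of the `Aᵢ` and `Bᵢ`, and when `P` has full column rank, `β ≠ 0` forces
`PβPᵀ ≠ 0`, so positive definiteness of `L` passes to `H`. -/

open Matrix Kronecker

/-- Column-stacking vectorization: `vecb M (i, j) = M j i`, so that
`(Bᵀ ⊗ₖ A) *ᵥ vecb X = vecb (A * X * B)`. -/
def vecb {s : ℕ} (M : Matrix (Fin s) (Fin s) ℝ) : Fin s × Fin s → ℝ := fun p => M p.2 p.1

theorem vecb_eq_vec {s : ℕ} (M : Matrix (Fin s) (Fin s) ℝ) : vecb M = M.vec := rfl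

namespace Matrix

variable {ι m n s R : Type*}

theorem IsSymm.transpose_mul_mul [Fintype n] [CommSemiring R] {B : Matrix n n R} (hB : B.IsSymm)
    (P : Matrix n s R) : (Pᵀ * B * P).IsSymm := by
  simp only [IsSymm, transpose_mul, transpose_transpose, hB.eq, Matrix.mul_assoc]

theorem IsSymm.kronecker [Mul R] {A : Matrix m m R} {B : Matrix n n R} (hA : A.IsSymm)
    (hB : B.IsSymm) : (A ⊗ₖ B).IsSymm := by
  rw [IsSymm, ← kroneckerMap_transpose, hA.eq, hB.eq]

theorem isSymm_sum [AddCommMonoid R] (t : Finset ι) {M : ι → Matrix n n R}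
    (hM : ∀ i ∈ t, (M i).IsSymm) : (∑ i ∈ t, M i).IsSymm := by
  rw [IsSymm, transpose_sum]
  exact Finset.sum_congr rfl fun i hi => (hM i hi).eq

theorem vec_dotProduct_kronecker_mulVec_vec [Fintype m] [Fintype n] [CommSemiring R]
    (X : Matrix m n R) (A : Matrix m m R) (B : Matrix n n R) :
    vec X ⬝ᵥ (Bᵀ ⊗ₖ A) *ᵥ vec X = (Xᵀ * (A * X * B)).trace := by
  rw [kronecker_mulVec_vec, vec_dotProduct_vec, transpose_transpose]

theorem vec_dotProduct_kronecker_congr_mulVec_vec [Fintype n] [Fintype s] [CommSemiring R]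
    (A : Matrix n n R) {B : Matrix n n R} (hB : B.IsSymm) (P : Matrix n s R) (β : Matrix s s R) :
    vec β ⬝ᵥ ((Pᵀ * B * P) ⊗ₖ (Pᵀ * A * P)) *ᵥ vec β
      = ((P * β * Pᵀ)ᵀ * (A * (P * β * Pᵀ) * B)).trace := by
  rw [← (hB.transpose_mul_mul P).eq, vec_dotProduct_kronecker_mulVec_vec]
  simp only [transpose_mul, transpose_transpose, Matrix.mul_assoc]
  rw [trace_mul_comm P]
  simp only [Matrix.mul_assoc]

theorem eq_zero_of_mul_eq_zero_of_mulVec_eq_zero [Fintype n] [Fintype s] [CommSemiring R]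
    {P : Matrix m n R} (hP : ∀ v, P *ᵥ v = 0 → v = 0) {Y : Matrix n s R} (h : P * Y = 0) :
    Y = 0 :=
  ext_iff_mulVec.mpr fun v => by
    rw [zero_mulVec]
    exact hP _ (by rw [mulVec_mulVec, h, zero_mulVec])

theorem mul_mul_transpose_ne_zero [Fintype m] [Fintype n] [CommSemiring R] {P : Matrix m n R}
    (hP : ∀ v, P *ᵥ v = 0 → v = 0) {β : Matrix n n R} (hβ : β ≠ 0) : P * β * Pᵀ ≠ 0 := by
  intro h
  have hβP : β * Pᵀ = 0 :=
    eq_zero_of_mul_eq_zero_of_mulVec_eq_zero hP (by rwa [← Matrix.mul_assoc])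
  have hPβ : P * βᵀ = 0 := by rw [← transpose_transpose P, ← transpose_mul, hβP, transpose_zero]
  exact hβ (transpose_eq_zero.mp (eq_zero_of_mul_eq_zero_of_mulVec_eq_zero hP hPβ))

end Matrix

/-- The Hessian of `φ(α) = Φ(X_k + P α Pᵀ)` is, in Kronecker (vectorized) form,
`H = Σᵢ (Pᵀ Bᵢ P) ⊗ (Pᵀ Aᵢ P)`: its quadratic form on `vec(β)` equals the second-order term
`⟨PβPᵀ, L(PβPᵀ)⟩` of `φ`. Moreover, `H` is symmetric, and if `P` has full column rank then
`H` is positive definite. -/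
theorem stmt_3 {n s ℓ : ℕ}
    (A B : Fin ℓ → Matrix (Fin n) (Fin n) ℝ)
    (hA : ∀ i, (A i)ᵀ = A i) (hB : ∀ i, (B i)ᵀ = B i)
    (hpd : ∀ X : Matrix (Fin n) (Fin n) ℝ, X ≠ 0 →
      0 < (Xᵀ * ∑ i, A i * X * B i).trace)
    (P : Matrix (Fin n) (Fin s) ℝ) :
    (∀ β : Matrix (Fin s) (Fin s) ℝ,
      vecb β ⬝ᵥ (∑ i, (Pᵀ * B i * P) ⊗ₖ (Pᵀ * A i * P)) *ᵥ vecb β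
        = ((P * β * Pᵀ)ᵀ * ∑ i, A i * (P * β * Pᵀ) * B i).trace) ∧
    (∑ i, (Pᵀ * B i * P) ⊗ₖ (Pᵀ * A i * P))ᵀ = ∑ i, (Pᵀ * B i * P) ⊗ₖ (Pᵀ * A i * P) ∧
    ((∀ v : Fin s → ℝ, P *ᵥ v = 0 → v = 0) →
      (∑ i, (Pᵀ * B i * P) ⊗ₖ (Pᵀ * A i * P)).PosDef) := by
  have quad : ∀ β : Matrix (Fin s) (Fin s) ℝ,
      vecb β ⬝ᵥ (∑ i, (Pᵀ * B i * P) ⊗ₖ (Pᵀ * A i * P)) *ᵥ vecb β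
        = ((P * β * Pᵀ)ᵀ * ∑ i, A i * (P * β * Pᵀ) * B i).trace := fun β => by
    rw [vecb_eq_vec, Matrix.mul_sum, trace_sum, sum_mulVec, dotProduct_sum]
    exact Finset.sum_congr rfl fun i _ =>
      vec_dotProduct_kronecker_congr_mulVec_vec _ (B := B i) (hB i) P β
  have hsymm : (∑ i, (Pᵀ * B i * P) ⊗ₖ (Pᵀ * A i * P)).IsSymm :=
    isSymm_sum _ fun i _ =>
      (IsSymm.transpose_mul_mul (hB i) P).kronecker (IsSymm.transpose_mul_mul (hA i) P)
  refine ⟨quad, hsymm, fun hP => posDef_iff_dotProduct_mulVec.mpr ⟨?_, fun v hv => ?_⟩⟩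
  · exact isHermitian_iff_isSymm.mpr hsymm
  · obtain ⟨β, rfl⟩ := vec_bijective.surjective v
    have hβ : β ≠ 0 := by rintro rfl; exact hv vec_zero
    have hpos := hpd _ (mul_mul_transpose_ne_zero hP hβ)
    rwa [← quad β, vecb_eq_vec] at hpos
end

section
/- Let L be a linear operator on n×n symmetric matrices with Lx = C having exact solution X. Let Pₖ ∈ R^{n×s} with Pₖᵀ Pₖ invertible, let Rₖ = C − L(Xₖ) for Xₖ = Pₖ τ Pₖᵀ, and suppose (i) range(L(Pₖ αₖ Pₖᵀ)) ⊆ range(Pₖ) where αₖ solves Pₖᵀ L(Pₖ αₖ Pₖᵀ)Pₖ = Pₖᵀ Rₖ Pₖ, and (ii) range(Rₖ) ⊆ range(Pₖ). Then the updated residual R_{k+1} = Rₖ − L(Pₖ αₖ Pₖᵀ) is zero, i.e., X_{k+1} = Xₖ + Pₖ αₖ Pₖᵀ is the exact solution. -/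
open Matrix

/-- Finite termination: with `Xₖ = Pₖ τ Pₖᵀ`, `Rₖ = C − L(Xₖ)`, `αₖ` the Galerkin solution,
if `range(L(Pₖ αₖ Pₖᵀ)) ⊆ range(Pₖ)` and `range(Rₖ) ⊆ range(Pₖ)` (with the natural symmetry
of the iterates in the multiterm Lyapunov setting), then the updated residual
`R_{k+1} = Rₖ − L(Pₖ αₖ Pₖᵀ)` vanishes, i.e. `X_{k+1} = Xₖ + Pₖ αₖ Pₖᵀ` is the exact
solution. -/
theorem stmt_9 {n s ℓ : ℕ}
    (A B : Fin ℓ → Matrix (Fin n) (Fin n) ℝ)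
    (hA : ∀ i, (A i)ᵀ = A i) (hB : ∀ i, (B i)ᵀ = B i)
    (hpd : ∀ X : Matrix (Fin n) (Fin n) ℝ, X ≠ 0 →
      0 < (Xᵀ * ∑ i, A i * X * B i).trace)
    (C : Matrix (Fin n) (Fin n) ℝ) (hC : Cᵀ = C)
    (P : Matrix (Fin n) (Fin s) ℝ) (hPinv : IsUnit (Pᵀ * P))
    (τ α : Matrix (Fin s) (Fin s) ℝ)
    (R : Matrix (Fin n) (Fin n) ℝ)
    (hRdef : R = C - ∑ i, A i * (P * τ * Pᵀ) * B i)
    (hRsym : Rᵀ = R)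
    (hLsym : (∑ i, A i * (P * α * Pᵀ) * B i)ᵀ = ∑ i, A i * (P * α * Pᵀ) * B i)
    (hgal : Pᵀ * (∑ i, A i * (P * α * Pᵀ) * B i) * P = Pᵀ * R * P)
    (hrange1 : ∃ W : Matrix (Fin s) (Fin n) ℝ, ∑ i, A i * (P * α * Pᵀ) * B i = P * W)
    (hrange2 : ∃ V : Matrix (Fin s) (Fin n) ℝ, R = P * V) :
    R - ∑ i, A i * (P * α * Pᵀ) * B i = 0 ∧
    ∑ i, A i * (P * τ * Pᵀ + P * α * Pᵀ) * B i = C := by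
  obtain ⟨W, hW⟩ := hrange1
  obtain ⟨V, hV⟩ := hrange2
  set L : Matrix (Fin n) (Fin n) ℝ := ∑ i, A i * (P * α * Pᵀ) * B i with hL
  set S : Matrix (Fin n) (Fin n) ℝ := R - L with hS
  -- S = P * (V - W)
  have hSP : S = P * (V - W) := by
    rw [hS, hV, hW, Matrix.mul_sub]
  -- S is symmetric
  have hSsym : Sᵀ = S := by
    rw [hS, Matrix.transpose_sub, hRsym, hLsym]
  -- Pᵀ S P = 0
  have hPSP : Pᵀ * S * P = 0 := by
    rw [hS, Matrix.mul_sub, Matrix.sub_mul, hgal, sub_self]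
  -- Pᵀ (V - W)ᵀ = 0
  have h1 : (Pᵀ * P) * ((V - W) * P) = 0 := by
    calc (Pᵀ * P) * ((V - W) * P) = Pᵀ * (P * (V - W)) * P := by
          rw [Matrix.mul_assoc, Matrix.mul_assoc, Matrix.mul_assoc]
      _ = Pᵀ * S * P := by rw [← hSP]
      _ = 0 := hPSP
  have h2 : (V - W) * P = 0 := by
    exact hPinv.mul_left_cancel (by rw [Matrix.mul_zero]; exact h1)
  -- Pᵀ * S = 0 : since S = Sᵀ = (V-W)ᵀ * Pᵀ
  have hPS : Pᵀ * S = 0 := by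
    have hS' : S = (V - W)ᵀ * Pᵀ := by
      rw [← hSsym, hSP, Matrix.transpose_mul]
    have h2t : Pᵀ * (V - W)ᵀ = 0 := by
      have := congrArg Matrix.transpose h2
      simpa [Matrix.transpose_mul] using this
    rw [hS', ← Matrix.mul_assoc, h2t, Matrix.zero_mul]
  -- Sᵀ S = 0 hence S = 0
  have hSS : Sᴴ * S = 0 := by
    have : Sᴴ = (V - W)ᵀ * Pᵀ := by
      have : Sᴴ = Sᵀ := by
        ext i j; simp [Matrix.conjTranspose_apply, Matrix.transpose_apply]
      rw [this, hSP, Matrix.transpose_mul]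
    rw [this, Matrix.mul_assoc, hPS, Matrix.mul_zero]
  have hS0 : S = 0 := Matrix.conjTranspose_mul_self_eq_zero.mp hSS
  refine ⟨hS0, ?_⟩
  have hRL : R = L := by
    have := hS0
    rw [hS, sub_eq_zero] at this
    exact this
  have : ∑ i, A i * (P * τ * Pᵀ + P * α * Pᵀ) * B i
      = (∑ i, A i * (P * τ * Pᵀ) * B i) + L := by
    rw [hL, ← Finset.sum_add_distrib]
    congr 1; ext i
    simp [Matrix.mul_add, Matrix.add_mul]
  rw [this, ← hRL, hRdef]
  abel
end

section
/- Let L(X) = Σᵢ AᵢXBᵢ (Aᵢ, Bᵢ symmetric, L positive definite in the trace inner product) and define the L-norm ‖Y‖_L² = ⟨Y, L(Y)⟩. Let X be the exact solution of L(X) = C, P ∈ R^{n×s} of full column rank, and let αₖ solve Pᵀ L(P α Pᵀ) P = Pᵀ C P. Then Z* = P αₖ Pᵀ is the unique minimizer of ‖X − Z‖_L over all Z of the form Z = P τ Pᵀ with τ ∈ R^{s×s}. -/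
open Matrix

/-- Optimality in the `L`-norm `‖Y‖_L² = ⟨Y, L(Y)⟩`: if `X` solves `L(X) = C`, `P` has full
column rank, and `αₖ` solves the Galerkin equation `Pᵀ L(P α Pᵀ) P = Pᵀ C P`, then
`Z* = P αₖ Pᵀ` is the unique minimizer of `‖X − Z‖_L` among all `Z = P τ Pᵀ`. -/
theorem stmt_10 {n s ℓ : ℕ}
    (A B : Fin ℓ → Matrix (Fin n) (Fin n) ℝ)
    (hA : ∀ i, (A i)ᵀ = A i) (hB : ∀ i, (B i)ᵀ = B i)
    (hpd : ∀ X : Matrix (Fin n) (Fin n) ℝ, X ≠ 0 →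
      0 < (Xᵀ * ∑ i, A i * X * B i).trace)
    (C X : Matrix (Fin n) (Fin n) ℝ)
    (hX : ∑ i, A i * X * B i = C)
    (P : Matrix (Fin n) (Fin s) ℝ)
    (hP : ∀ v : Fin s → ℝ, P *ᵥ v = 0 → v = 0)
    (αk : Matrix (Fin s) (Fin s) ℝ)
    (hαk : Pᵀ * (∑ i, A i * (P * αk * Pᵀ) * B i) * P = Pᵀ * C * P) :
    (∀ τ : Matrix (Fin s) (Fin s) ℝ,
      ((X - P * αk * Pᵀ)ᵀ * ∑ i, A i * (X - P * αk * Pᵀ) * B i).trace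
        ≤ ((X - P * τ * Pᵀ)ᵀ * ∑ i, A i * (X - P * τ * Pᵀ) * B i).trace) ∧
    (∀ τ : Matrix (Fin s) (Fin s) ℝ,
      ((X - P * τ * Pᵀ)ᵀ * ∑ i, A i * (X - P * τ * Pᵀ) * B i).trace
        = ((X - P * αk * Pᵀ)ᵀ * ∑ i, A i * (X - P * αk * Pᵀ) * B i).trace →
      P * τ * Pᵀ = P * αk * Pᵀ) := by
  set Lm : Matrix (Fin n) (Fin n) ℝ → Matrix (Fin n) (Fin n) ℝ :=
    fun Y => ∑ i, A i * Y * B i with hLm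
  have hlin : ∀ Y Z, Lm (Y - Z) = Lm Y - Lm Z := by
    intro Y Z
    simp [hLm, Matrix.mul_sub, Matrix.sub_mul, Finset.sum_sub_distrib]
  have hadj : ∀ Y Z : Matrix (Fin n) (Fin n) ℝ,
      (Yᵀ * Lm Z).trace = (Zᵀ * Lm Y).trace := by
    intro Y Z
    simp only [hLm, Finset.mul_sum, trace_sum]
    refine Finset.sum_congr rfl fun i _ => ?_
    rw [← Matrix.trace_transpose (Yᵀ * (A i * Z * B i))]
    simp only [Matrix.transpose_mul, Matrix.transpose_transpose, hA, hB]
    rw [Matrix.trace_mul_comm]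
    simp only [Matrix.mul_assoc]
    rw [← Matrix.mul_assoc, ← Matrix.mul_assoc, Matrix.trace_mul_cycle,
      Matrix.trace_mul_comm]
  have expand : ∀ Y Z : Matrix (Fin n) (Fin n) ℝ,
      ((Y - Z)ᵀ * Lm (Y - Z)).trace
        = (Yᵀ * Lm Y).trace - 2 * (Zᵀ * Lm Y).trace + (Zᵀ * Lm Z).trace := by
    intro Y Z
    rw [hlin, Matrix.transpose_sub]
    simp only [Matrix.sub_mul, Matrix.mul_sub, Matrix.trace_sub]
    rw [hadj Y Z]
    ring
  have key : ∀ τ : Matrix (Fin s) (Fin s) ℝ,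
      ((X - P * τ * Pᵀ)ᵀ * Lm (X - P * τ * Pᵀ)).trace
        = ((X - P * αk * Pᵀ)ᵀ * Lm (X - P * αk * Pᵀ)).trace
          + ((P * (τ - αk) * Pᵀ)ᵀ * Lm (P * (τ - αk) * Pᵀ)).trace := by
    intro τ
    have hED : X - P * τ * Pᵀ = (X - P * αk * Pᵀ) - (P * (τ - αk) * Pᵀ) := by
      simp only [Matrix.mul_sub, Matrix.sub_mul]
      abel
    have hLE : Lm (X - P * αk * Pᵀ) = C - Lm (P * αk * Pᵀ) := by
      rw [hlin]
      simp only [hLm]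
      rw [hX]
    have hz : Pᵀ * (C - Lm (P * αk * Pᵀ)) * P = 0 := by
      simp only [Matrix.mul_sub, Matrix.sub_mul, hLm]
      rw [hαk, sub_self]
    have hc : ((P * (τ - αk) * Pᵀ)ᵀ * Lm (X - P * αk * Pᵀ)).trace = 0 := by
      have hDt : (P * (τ - αk) * Pᵀ)ᵀ = P * (τ - αk)ᵀ * Pᵀ := by
        simp [Matrix.transpose_mul, Matrix.mul_assoc]
      rw [hLE, hDt]
      set M := (τ - αk)ᵀ with hM
      set Q := C - Lm (P * αk * Pᵀ) with hQ
      calc (P * M * Pᵀ * Q).trace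
          = ((P * M) * (Pᵀ * Q)).trace := by rw [Matrix.mul_assoc]
        _ = ((Pᵀ * Q) * (P * M)).trace := by rw [Matrix.trace_mul_comm]
        _ = ((Pᵀ * Q * P) * M).trace := by simp only [Matrix.mul_assoc]
        _ = (M * (Pᵀ * Q * P)).trace := by rw [Matrix.trace_mul_comm]
        _ = 0 := by rw [hz, Matrix.mul_zero, Matrix.trace_zero]
    rw [hED, expand (X - P * αk * Pᵀ) (P * (τ - αk) * Pᵀ), hc]
    ring
  have hpd' : ∀ τ : Matrix (Fin s) (Fin s) ℝ,
      0 ≤ ((P * (τ - αk) * Pᵀ)ᵀ * Lm (P * (τ - αk) * Pᵀ)).trace := by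
    intro τ
    by_cases h : P * (τ - αk) * Pᵀ = 0
    · rw [h]; simp [hLm]
    · exact le_of_lt (hpd _ h)
  constructor
  · intro τ
    have := hpd' τ
    rw [key τ]
    linarith
  · intro τ heq
    rw [key τ] at heq
    have h0 : ((P * (τ - αk) * Pᵀ)ᵀ * Lm (P * (τ - αk) * Pᵀ)).trace = 0 := by
      linarith
    have hD0 : P * (τ - αk) * Pᵀ = 0 := by
      by_contra h
      exact absurd h0 (ne_of_gt (hpd _ h))
    have h1 : P * τ * Pᵀ - P * αk * Pᵀ = 0 := by
      rw [← hD0]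
      simp only [Matrix.mul_sub, Matrix.sub_mul]
    exact sub_eq_zero.mp h1
end
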